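/- There exists an optimal attacker strategy (π, B) whose guessing order π has no inversions, i.e., satisfies p(π(a))·k(π(b)) ≥ p(π(b))·k(π(a)) for all positions a ≤ b. -/

import Mathlib

/-!
Take any optimal strategy `(π₀, B)`. Exchanging two adjacent guesses inside the budget changes the
utility by `k a * p b - k b * p a`, so optimality forbids adjacent inversions there. At the
boundary, optimality of the budget says the last guess has nonnegative marginal gain
`v p - k (1 - λ)` and the next one nonpositive gain; since `λ` only grows, this forces the
last guess to have the larger ratio `p / k`. The guesses beyond the budget do not affect the
utility, so we may sort them by decreasing ratio, and the resulting order has no inversions.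
-/

open Finset

/-- Success probability λ(π,B): sum of probabilities of the first B guesses. -/
noncomputable def lam (n : ℕ) (p : Fin n → ℝ) (π : Equiv.Perm (Fin n)) (B : ℕ) : ℝ :=
  ∑ t : Fin n, if t.val < B then p (π t) else 0

/-- Attacker utility U(π,B) = v·λ(π,B) − Σ_{t<B} k(π(t))·(1 − λ(π,t)). -/
noncomputable def U (n : ℕ) (p k : Fin n → ℝ) (v : ℝ) (π : Equiv.Perm (Fin n)) (B : ℕ) : ℝ :=
  v * lam n p π B - ∑ t : Fin n, if t.val < B then k (π t) * (1 - lam n p π t.val) else 0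

theorem antitone_fin_of_succ_le {α : Type*} [Preorder α] {n : ℕ} {f : Fin n → α}
    (h : ∀ (j : ℕ) (hj : j + 1 < n), f ⟨j + 1, hj⟩ ≤ f ⟨j, by omega⟩) : Antitone f := by
  cases n with
  | zero => exact fun a => a.elim0
  | succ m => exact Fin.antitone_iff_succ_le.mpr fun i => h i (by simp)

theorem exists_perm_fix_lt_antitoneOn {α : Type*} [LinearOrder α] {n : ℕ} (f : Fin n → α)
    (B : ℕ) :
    ∃ τ : Equiv.Perm (Fin n), (∀ t : Fin n, t.val < B → τ t = t) ∧
      ∀ a b : Fin n, B ≤ a.val → a ≤ b → f (τ b) ≤ f (τ a) := by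
  let block : Fin n → ℕ := fun t => min t.val B
  let g : Fin n → ℕ ×ₗ αᵒᵈ := fun t => toLex (block t, OrderDual.toDual (f t))
  have hsorted : Monotone (g ∘ Tuple.sort g) := Tuple.monotone_sort g
  -- sorting by `g` cannot move any position across `B`, since `block` is already monotone
  have hblock : block ∘ Tuple.sort g = block ∘ (1 : Equiv.Perm (Fin n)) :=
    Tuple.unique_monotone (f := block) (Prod.Lex.monotone_fst_ofLex.comp hsorted)
      fun a b hab => min_le_min_right B hab
  have hblock' : ∀ t, min (Tuple.sort g t).val B = min t.val B := congrFun hblock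
  refine ⟨Tuple.sort g, fun t ht => Fin.ext (by have := hblock' t; omega),
    fun a b ha hab => ?_⟩
  have hle : g (Tuple.sort g a) ≤ g (Tuple.sort g b) := hsorted hab
  have hblock_eq : block (Tuple.sort g a) = block (Tuple.sort g b) := by
    simp only [block, hblock']; omega
  simpa [g, hblock_eq, Prod.Lex.toLex_le_toLex] using hle

section Utility

variable {n : ℕ} (p k : Fin n → ℝ) (v : ℝ)

theorem sum_ite_lt_succ (f : Fin n → ℝ) (B : ℕ) (hB : B < n) :
    (∑ t : Fin n, if t.val < B + 1 then f t else 0)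
      = (∑ t : Fin n, if t.val < B then f t else 0) + f ⟨B, hB⟩ := by
  rw [← Finset.sum_ite_eq' univ (⟨B, hB⟩ : Fin n) f |>.trans (if_pos (mem_univ _)),
    ← sum_add_distrib]
  refine sum_congr rfl fun t _ => ?_
  split_ifs <;> simp_all [Fin.ext_iff] <;> omega

theorem lam_zero (π : Equiv.Perm (Fin n)) : lam n p π 0 = 0 := by
  simp [lam]

theorem lam_succ (π : Equiv.Perm (Fin n)) (B : ℕ) (hB : B < n) :
    lam n p π (B + 1) = lam n p π B + p (π ⟨B, hB⟩) :=
  sum_ite_lt_succ (fun t => p (π t)) B hB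

theorem lam_le_one (hp : ∀ i, 0 ≤ p i) (hpsum : ∑ i, p i ≤ 1)
    (π : Equiv.Perm (Fin n)) (B : ℕ) : lam n p π B ≤ 1 :=
  calc lam n p π B ≤ ∑ t, p (π t) :=
        sum_le_sum fun t _ => by split_ifs <;> simp [hp]
    _ = ∑ i, p i := Equiv.sum_comp π p
    _ ≤ 1 := hpsum

theorem U_zero (π : Equiv.Perm (Fin n)) : U n p k v π 0 = 0 := by
  simp [U, lam_zero]

theorem U_succ (π : Equiv.Perm (Fin n)) (B : ℕ) (hB : B < n) :
    U n p k v π (B + 1) = U n p k v π B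
      + (v * p (π ⟨B, hB⟩) - k (π ⟨B, hB⟩) * (1 - lam n p π B)) := by
  unfold U
  rw [lam_succ p π B hB, sum_ite_lt_succ (fun t => k (π t) * (1 - lam n p π t.val)) B hB]
  ring

variable {p k v} {π π' : Equiv.Perm (Fin n)} {m B : ℕ}

theorem lam_eq_of_eqOn_Ico (hmB : m ≤ B) (hBn : B ≤ n) (hm : lam n p π m = lam n p π' m)
    (h : ∀ t : Fin n, m ≤ t.val → t.val < B → π t = π' t) :
    lam n p π B = lam n p π' B := by
  induction B, hmB using Nat.le_induction with
  | base => exact hm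
  | succ B hmB ih =>
    rw [lam_succ p π B hBn, lam_succ p π' B hBn, ih (by omega) fun t h₁ h₂ => h t h₁ (by omega),
      h _ hmB (by simp)]

theorem U_eq_add_of_eqOn_Ico (c : ℝ) (hmB : m ≤ B) (hBn : B ≤ n)
    (hlam : lam n p π m = lam n p π' m) (hU : U n p k v π m = U n p k v π' m + c)
    (h : ∀ t : Fin n, m ≤ t.val → t.val < B → π t = π' t) :
    U n p k v π B = U n p k v π' B + c := by
  induction B, hmB using Nat.le_induction with
  | base => exact hU
  | succ B hmB ih =>
    have h' : ∀ t : Fin n, m ≤ t.val → t.val < B → π t = π' t := fun t h₁ h₂ => h t h₁ (by omega)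
    rw [U_succ p k v π B hBn, U_succ p k v π' B hBn, ih (by omega) h',
      lam_eq_of_eqOn_Ico hmB (by omega) hlam h', h _ hmB (by simp)]
    ring

theorem U_eq_of_eqOn_prefix (hBn : B ≤ n) (h : ∀ t : Fin n, t.val < B → π t = π' t) :
    U n p k v π B = U n p k v π' B := by
  simpa using U_eq_add_of_eqOn_Ico 0 B.zero_le hBn (by simp only [lam_zero])
    (by simp only [U_zero, add_zero]) fun t _ => h t

theorem U_mul_swap_succ (π : Equiv.Perm (Fin n)) (j : ℕ) (hj : j + 1 < n) (hjB : j + 2 ≤ B)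
    (hBn : B ≤ n) :
    U n p k v (π * Equiv.swap ⟨j, by omega⟩ ⟨j + 1, hj⟩) B = U n p k v π B
      + (k (π ⟨j, by omega⟩) * p (π ⟨j + 1, hj⟩) - k (π ⟨j + 1, hj⟩) * p (π ⟨j, by omega⟩)) := by
  set a : Fin n := ⟨j, by omega⟩ with ha
  set b : Fin n := ⟨j + 1, hj⟩ with hb
  set σ := π * Equiv.swap a b
  have hσa : σ a = π b := by simp [σ]
  have hσb : σ b = π a := by simp [σ]
  have hσ : ∀ t : Fin n, t ≠ a → t ≠ b → σ t = π t := fun t hta htb => by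
    simp [σ, Equiv.swap_apply_of_ne_of_ne hta htb]
  have hprefix : ∀ t : Fin n, t.val < j → σ t = π t := fun t ht =>
    hσ t (by simp [a, Fin.ext_iff]; omega) (by simp [b, Fin.ext_iff]; omega)
  have hlam_j : lam n p σ j = lam n p π j :=
    lam_eq_of_eqOn_Ico j.zero_le (by omega) (by simp only [lam_zero]) fun t _ => hprefix t
  have hU_j : U n p k v σ j = U n p k v π j := U_eq_of_eqOn_prefix (by omega) hprefix
  have hlam : lam n p σ (j + 2) = lam n p π (j + 2) := by
    rw [lam_succ p σ (j + 1) hj, lam_succ p π (j + 1) hj, lam_succ p σ j (by omega),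
      lam_succ p π j (by omega), hlam_j, ← ha, ← hb, hσa, hσb]
    ring
  have hU : U n p k v σ (j + 2) = U n p k v π (j + 2)
      + (k (π a) * p (π b) - k (π b) * p (π a)) := by
    rw [U_succ p k v σ (j + 1) hj, U_succ p k v π (j + 1) hj, U_succ p k v σ j (by omega),
      U_succ p k v π j (by omega), lam_succ p σ j (by omega), lam_succ p π j (by omega),
      hlam_j, hU_j, ← ha, ← hb, hσa, hσb]
    ring
  refine U_eq_add_of_eqOn_Ico _ hjB hBn hlam hU fun t ht _ => hσ t ?_ ?_ <;>
    simp [a, b, Fin.ext_iff] <;> omega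

theorem no_inversion_at_budget (hp : ∀ i, 0 ≤ p i) (hpsum : ∑ i, p i ≤ 1) (hk : ∀ i, 0 < k i)
    (π : Equiv.Perm (Fin n)) (j : ℕ) (hj : j + 1 < n)
    (hprev : U n p k v π j ≤ U n p k v π (j + 1))
    (hnext : U n p k v π (j + 2) ≤ U n p k v π (j + 1)) :
    p (π ⟨j + 1, hj⟩) * k (π ⟨j, by omega⟩) ≤ p (π ⟨j, by omega⟩) * k (π ⟨j + 1, hj⟩) := by
  have htotal := lam_le_one p hp hpsum π (j + 2)
  rw [U_succ p k v π j (by omega)] at hprev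
  rw [U_succ p k v π (j + 1) hj, lam_succ p π j (by omega)] at hnext
  rw [lam_succ p π (j + 1) hj, lam_succ p π j (by omega)] at htotal
  set x := π ⟨j, by omega⟩
  set y := π ⟨j + 1, hj⟩
  set L := lam n p π j
  -- weigh the marginal gains of `x` (`≥ 0`) and of `y` (`≤ 0`) by `p y` and `p x`
  have key : (1 - L) * (p y * k x - p x * k y) ≤ 0 := by
    nlinarith [mul_le_mul_of_nonneg_left hprev (hp y), mul_le_mul_of_nonneg_left hnext (hp x),
      mul_nonneg (hk y).le (sq_nonneg (p x))]
  rcases (show 0 ≤ 1 - L by linarith [hp x, hp y]).lt_or_eq with hL | hL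
  · nlinarith
  · obtain ⟨hx, hy⟩ : p x = 0 ∧ p y = 0 := ⟨by linarith [hp x, hp y], by linarith [hp x, hp y]⟩
    simp [hx, hy]

end Utility

theorem exists_optimal (n : ℕ) (p k : Fin n → ℝ) (v : ℝ) :
    ∃ (π : Equiv.Perm (Fin n)) (B : ℕ), B ≤ n ∧
      ∀ (π' : Equiv.Perm (Fin n)) (B' : ℕ), B' ≤ n → U n p k v π' B' ≤ U n p k v π B := by
  obtain ⟨⟨π, B, hB⟩, hmax⟩ :=
    Finite.exists_max fun s : Equiv.Perm (Fin n) × Fin (n + 1) => U n p k v s.1 s.2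
  exact ⟨π, B, Nat.lt_succ_iff.mp hB, fun π' B' hB' => hmax (π', ⟨B', Nat.lt_succ_of_le hB'⟩)⟩

theorem stmt_1_general (n : ℕ) (p k : Fin n → ℝ) (v : ℝ)
    (hp : ∀ i, 0 ≤ p i) (hpsum : ∑ i, p i ≤ 1) (hk : ∀ i, 0 < k i) :
    ∃ (π : Equiv.Perm (Fin n)) (B : ℕ), B ≤ n ∧
      (∀ a b : Fin n, a ≤ b → p (π a) * k (π b) ≥ p (π b) * k (π a)) ∧
      (∀ (π' : Equiv.Perm (Fin n)) (B' : ℕ), B' ≤ n →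
        U n p k v π B ≥ U n p k v π' B') := by
  obtain ⟨π₀, B, hBn, hopt₀⟩ := exists_optimal n p k v
  obtain ⟨τ, hτfix, hτsorted⟩ := exists_perm_fix_lt_antitoneOn (fun i => p (π₀ i) / k (π₀ i)) B
  set π := π₀ * τ
  have hopt : ∀ π' B', B' ≤ n → U n p k v π' B' ≤ U n p k v π B := fun π' B' hB' => by
    rw [U_eq_of_eqOn_prefix (π' := π₀) hBn fun t ht => by simp [π, hτfix t ht]]
    exact hopt₀ π' B' hB'
  have hratio : Antitone fun t => p (π t) / k (π t) := by
    refine antitone_fin_of_succ_le fun j hj => ?_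
    rcases lt_trichotomy (j + 1) B with hjB | rfl | hjB
    · refine (div_le_div_iff₀ (hk _) (hk _)).mpr ?_
      linarith [U_mul_swap_succ (p := p) (k := k) (v := v) π j hj hjB hBn,
        hopt (π * Equiv.swap ⟨j, by omega⟩ ⟨j + 1, hj⟩) B hBn]
    · exact (div_le_div_iff₀ (hk _) (hk _)).mpr <|
        no_inversion_at_budget hp hpsum hk π j hj (hopt π j (by omega)) (hopt π (j + 2) hj)
    · exact hτsorted _ _ (by simp; omega) (Fin.mk_le_mk.mpr (by omega))
  exact ⟨π, B, hBn, fun a b hab => (div_le_div_iff₀ (hk _) (hk _)).mp (hratio hab), hopt⟩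

theorem stmt_1 (n : ℕ) (p k : Fin n → ℝ) (v : ℝ)
    (hp : ∀ i, 0 ≤ p i) (hpsum : ∑ i, p i ≤ 1) (hk : ∀ i, 0 < k i) (hv : 0 ≤ v) :
    ∃ (π : Equiv.Perm (Fin n)) (B : ℕ), B ≤ n ∧
      (∀ a b : Fin n, a ≤ b → p (π a) * k (π b) ≥ p (π b) * k (π a)) ∧
      (∀ (π' : Equiv.Perm (Fin n)) (B' : ℕ), B' ≤ n →
        U n p k v π B ≥ U n p k v π' B') :=
  stmt_1_general n p k v hp hpsum hk
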